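/- arXiv:2011.06726 — 4 statements merged into one kernel-verified Lean document; each statement's English description precedes it below -/
import Mathlib

section
/- In the secretary-with-samples model, where n+k distinct values are randomly split into k samples and n online candidates in random order, the probability that the i-th online candidate is the best of the n online candidates AND exactly s of the k samples are smaller than it equals (1/(k+1)) · ∏_{t=1}^{n-1} (s+t)/(k+t+1). -/
/-!
Record a permutation `σ` (position ↦ rank) only on the `n` online positions, as an embedding
`Fin n ↪ Fin (n + k)`. The permutation group acts transitively on such embeddings, so this record
is uniformly distributed. Candidate `i` is the best online one with exactly `s` smaller samples iff
its rank is `(n - 1) + s` and every other online rank is below it; these are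
`(n + s - 1)_(n - 1)` embeddings out of `(n + k)_n`, and the quotient of the falling factorials
telescopes into the stated product.
-/

open scoped Classical
open Finset

namespace MulAction

variable {G X : Type*} [Group G] [Fintype G] [MulAction G X] [DecidableEq X]

theorem card_filter_smul_mem_mul_card [Fintype X] [IsPretransitive G X] (x : X) (E : Finset X) :
    #{g : G | g • x ∈ E} * Fintype.card X = #E * Fintype.card G := by
  have hfiber (y : X) : #{g : G | g • x = y} = #{g : G | g • x = x} := by
    obtain ⟨g₀, rfl⟩ := exists_smul_eq G x y
    refine card_nbij' (g₀⁻¹ * ·) (g₀ * ·) ?_ ?_ (fun g _ => ?_) (fun g _ => ?_) <;>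
      simp_all [Set.MapsTo, mul_smul]
  have hE : #{g : G | g • x ∈ E} = #E * #{g : G | g • x = x} := by
    rw [card_eq_sum_card_fiberwise (f := (· • x)) (t := E) fun g hg => by simpa using hg]
    refine sum_const_nat fun y hy => ?_
    rw [filter_filter, ← hfiber y]
    congr 1; ext g; simp only [mem_filter, mem_univ, true_and, and_iff_right_iff_imp]
    rintro rfl; exact hy
  have huniv : Fintype.card G = Fintype.card X * #{g : G | g • x = x} := by
    rw [← card_univ, card_eq_sum_card_fiberwise (f := (· • x)) (t := univ) (by simp),
      sum_const_nat fun y _ => by simpa using hfiber y]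
    rfl
  rw [hE, huniv]; ring

theorem card_filter_smul_mem_div_card [Fintype X] [IsPretransitive G X] (x : X) (E : Finset X) :
    (#{g : G | g • x ∈ E} : ℚ) / Fintype.card G = #E / Fintype.card X := by
  have : Nonempty X := ⟨x⟩
  rw [div_eq_div_iff (by simp) (by simp)]
  exact_mod_cast card_filter_smul_mem_mul_card (G := G) x E

end MulAction

namespace Function.Embedding

noncomputable def restrictNeEquiv {ι β : Type*} (i₀ : ι) {b : β} {U : Finset β} (hb : b ∉ U) :
    {e : ι ↪ β // e i₀ = b ∧ ∀ i ≠ i₀, e i ∈ U} ≃ ({i // i ≠ i₀} ↪ U) where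
  toFun e := ⟨fun i => ⟨e.1 i, e.2.2 i i.2⟩,
    fun _ _ h => Subtype.ext (e.1.injective (congrArg Subtype.val h))⟩
  invFun f := ⟨(Equiv.optionSubtypeNe i₀).symm.toEmbedding.trans
      ((f.trans (Embedding.subtype _)).optionElim b
        (by simpa using fun i => ne_of_mem_of_not_mem (f i).2 hb)),
    by simp +contextual⟩
  left_inv e := by
    ext i
    by_cases h : i = i₀
    · subst h; simp [e.2.1]
    · simp only [ne_eq, trans_apply, coeFn_mk, Equiv.optionSubtypeNe_symm_apply, h, ↓reduceDIte,
        optionElim_apply, Option.elim'_some, subtype_apply]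
      rfl
  right_inv f := by ext i; simp [i.2]

lemma card_filter_apply_eq_and_mem {ι β : Type*} [Fintype ι] [Fintype β] (i₀ : ι) {b : β}
    {U : Finset β} (hb : b ∉ U) :
    #{e : ι ↪ β | e i₀ = b ∧ ∀ i ≠ i₀, e i ∈ U} = (#U).descFactorial (Fintype.card ι - 1) := by
  rw [← Fintype.card_subtype, Fintype.card_congr (restrictNeEquiv i₀ hb),
    Fintype.card_embedding_eq, Fintype.card_coe, Fintype.card_subtype_compl,
    Fintype.card_subtype_eq]

end Function.Embedding

theorem Fin.mem_range_addNatEmb {n k : ℕ} {q : Fin (n + k)} :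
    q ∈ Set.range (Fin.addNatEmb k : Fin n ↪ Fin (n + k)) ↔ k ≤ (q : ℕ) := by
  refine ⟨by rintro ⟨j, rfl⟩; simp, fun hq => ⟨⟨q - k, by omega⟩, ?_⟩⟩
  ext; simp only [Fin.addNatEmb_apply, Fin.addNat_mk]; omega

theorem Fin.lt_iff_notMem_range_addNatEmb {n k : ℕ} {q : Fin (n + k)} :
    (q : ℕ) < k ↔ q ∉ Set.range (Fin.addNatEmb k : Fin n ↪ Fin (n + k)) := by
  rw [Fin.mem_range_addNatEmb, not_le]

theorem Fin.forall_le_imp_iff {n k : ℕ} {P : Fin (n + k) → Prop} :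
    (∀ q : Fin (n + k), k ≤ (q : ℕ) → P q) ↔ ∀ j : Fin n, P (Fin.addNatEmb k j) := by
  refine ⟨fun h j => h _ (Fin.mem_range_addNatEmb.1 ⟨j, rfl⟩), fun h q hq => ?_⟩
  obtain ⟨j, rfl⟩ := Fin.mem_range_addNatEmb.2 hq
  exact h j

lemma card_filter_apply_lt {α : Type*} [Fintype α] {m : ℕ} (σ : α ≃ Fin m) (c : Fin m) :
    #{q | σ q < c} = c := by
  rw [card_equiv σ (t := Iio c) (by simp), Fin.card_Iio]

section Rank

variable {α ι : Type*} [Fintype α] [Fintype ι] {m : ℕ} (σ : α ≃ Fin m) (f : ι ↪ α)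
  [DecidablePred (· ∈ Set.range f)] (j₀ : ι)

lemma val_apply_eq_card_filter_add (hmax : ∀ j ≠ j₀, σ (f j) < σ (f j₀)) :
    (σ (f j₀) : ℕ) = #{q | q ∉ Set.range f ∧ σ q < σ (f j₀)} + (Fintype.card ι - 1) := by
  have hrange : ({q | q ∈ Set.range f ∧ σ q < σ (f j₀)} : Finset α) = (univ.erase j₀).map f := by
    ext q
    simp only [mem_filter, mem_univ, true_and, mem_map, mem_erase]
    constructor
    · rintro ⟨⟨j, rfl⟩, hj⟩
      exact ⟨j, ⟨fun h => by subst h; exact lt_irrefl _ hj, trivial⟩, rfl⟩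
    · rintro ⟨j, ⟨hj, -⟩, rfl⟩
      exact ⟨⟨j, rfl⟩, hmax j hj⟩
  rw [← card_filter_apply_lt σ (σ (f j₀)),
    ← card_filter_add_card_filter_not (fun q => q ∈ Set.range f), filter_filter,
    filter_filter, add_comm]
  simp_rw [and_comm (a := σ _ < _), hrange, card_map, card_erase_of_mem (mem_univ _), card_univ]

lemma forall_lt_and_card_filter_eq_iff {s : ℕ} {v : Fin m}
    (hv : (v : ℕ) = s + (Fintype.card ι - 1)) :
    ((∀ j ≠ j₀, σ (f j) < σ (f j₀)) ∧ #{q | q ∉ Set.range f ∧ σ q < σ (f j₀)} = s) ↔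
      σ (f j₀) = v ∧ ∀ j ≠ j₀, σ (f j) < v := by
  constructor
  · rintro ⟨hmax, rfl⟩
    have hσv : σ (f j₀) = v := Fin.ext ((val_apply_eq_card_filter_add σ f j₀ hmax).trans hv.symm)
    exact ⟨hσv, hσv ▸ hmax⟩
  · rintro ⟨hσv, hmax⟩
    rw [← hσv] at hmax
    have hrank := val_apply_eq_card_filter_add σ f j₀ hmax
    exact ⟨hmax, by omega⟩

end Rank

theorem Equiv.Perm.smul_addNatEmb_mem_iff {n k s : ℕ} (σ : Equiv.Perm (Fin (n + k))) (j₀ : Fin n)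
    {v : Fin (n + k)} (hv : (v : ℕ) = s + (n - 1)) :
    σ • Fin.addNatEmb k ∈ ({e | e j₀ = v ∧ ∀ j ≠ j₀, e j ∈ Iio v} : Finset (Fin n ↪ Fin (n + k))) ↔
      (∀ q : Fin (n + k), k ≤ (q : ℕ) → q ≠ Fin.addNatEmb k j₀ → σ q < σ (Fin.addNatEmb k j₀)) ∧
        #{q : Fin (n + k) | (q : ℕ) < k ∧ σ q < σ (Fin.addNatEmb k j₀)} = s := by
  simp only [Fin.forall_le_imp_iff, ne_eq, EmbeddingLike.apply_eq_iff_eq,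
    Fin.lt_iff_notMem_range_addNatEmb]
  rw [forall_lt_and_card_filter_eq_iff σ (Fin.addNatEmb k) j₀ (by simpa using hv)]
  simp [Function.Embedding.smul_apply, Equiv.Perm.smul_def]

lemma descFactorial_div_descFactorial_eq_prod (k s N : ℕ) :
    ((N + s).descFactorial N : ℚ) / (N + 1 + k).descFactorial (N + 1) =
      1 / ((k : ℚ) + 1) * ∏ t ∈ Icc 1 N, ((s : ℚ) + t) / ((k : ℚ) + t + 1) := by
  induction N with
  | zero => simp [add_comm]
  | succ N ih =>
    rw [prod_Icc_succ_top (by omega), ← mul_assoc, ← ih, show N + 1 + s = N + s + 1 by ring,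
      show N + 1 + 1 + k = N + 1 + k + 1 by ring, Nat.succ_descFactorial_succ,
      Nat.succ_descFactorial_succ]
    push_cast
    field_simp
    ring

/-- Secretary with samples: place a uniformly random total order on `n+k` elements, where
positions `0,…,k-1` are the samples and positions `k,…,k+n-1` are the online candidates in
arrival order.  For the `i`-th online candidate (`1 ≤ i ≤ n`) and a signal value `s ≤ k`,
the probability that it is the best of the `n` online candidates and exactly `s` of the `k`
samples are smaller than it equals `(1/(k+1)) · ∏_{t=1}^{n-1} (s+t)/(k+t+1)`. -/
theorem stmt_6 (n k i s : ℕ) (hi : 1 ≤ i) (hin : i ≤ n) (hs : s ≤ k) :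
    ((Finset.univ.filter (fun σ : Equiv.Perm (Fin (n + k)) =>
        (∀ q : Fin (n + k), k ≤ (q : ℕ) → q ≠ (⟨k + i - 1, by omega⟩ : Fin (n + k)) →
          σ q < σ (⟨k + i - 1, by omega⟩ : Fin (n + k))) ∧
        (Finset.univ.filter (fun p : Fin (n + k) =>
          (p : ℕ) < k ∧ σ p < σ (⟨k + i - 1, by omega⟩ : Fin (n + k)))).card = s)).card : ℚ) /
      ((Finset.univ : Finset (Equiv.Perm (Fin (n + k)))).card : ℚ) =
      (1 / ((k : ℚ) + 1)) *
        ∏ t ∈ Finset.Icc 1 (n - 1), (((s : ℚ) + (t : ℚ)) / ((k : ℚ) + (t : ℚ) + 1)) := by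
  obtain ⟨N, rfl⟩ : ∃ N, n = N + 1 := ⟨n - 1, by omega⟩
  set j₀ : Fin (N + 1) := ⟨i - 1, by omega⟩
  set v : Fin (N + 1 + k) := ⟨N + s, by omega⟩
  have hv : (v : ℕ) = s + (N + 1 - 1) := by simp [v, add_comm]
  set E : Finset (Fin (N + 1) ↪ Fin (N + 1 + k)) := {e | e j₀ = v ∧ ∀ j ≠ j₀, e j ∈ Iio v}
  have hp : (⟨k + i - 1, by omega⟩ : Fin (N + 1 + k)) = Fin.addNatEmb k j₀ := by
    ext; simp only [Fin.addNatEmb_apply, Fin.addNat_mk, j₀]; omega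
  have hE : #E = (N + s).descFactorial N := by
    have h := Function.Embedding.card_filter_apply_eq_and_mem (b := v) (U := Iio v) j₀ (by simp)
    rw [Fin.card_Iio, Fintype.card_fin, Nat.add_sub_cancel] at h
    convert h
  have := Equiv.Perm.isMultiplyPretransitive (Fin (N + 1 + k)) (N + 1)
  rw [hp, filter_congr fun σ _ => (σ.smul_addNatEmb_mem_iff j₀ hv).symm, card_univ,
    MulAction.card_filter_smul_mem_div_card (Fin.addNatEmb k) E, hE, Fintype.card_embedding_eq]
  simpa using descFactorial_div_descFactorial_eq_prod k s N
end

section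
/- For the secretary problem with samples, the backward-induction dual variables defined by u(n,s) = (1/(k+1)) · ∏_{t=1}^{n-1} (s+t)/(k+t+1) and u(i,s) = max{0, a(i,s) − ∑_{j>i} ∑_{s'≥s} u(j,s') · (1/(s'+1)) · ∏_{t=1}^{i-1} (s+t)/(s'+t+1)} are non-decreasing in i for every fixed s. -/
private def Aa (n k : ℕ) (s : ℕ) : ℚ :=
  (1 / ((k : ℚ) + 1)) * ∏ t ∈ Finset.Icc 1 (n - 1), (((s : ℚ) + t) / ((k : ℚ) + t + 1))

private def cc (i s s' : ℕ) : ℚ :=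
  (1 / ((s' : ℚ) + 1)) * ∏ t ∈ Finset.Icc 1 (i - 1), (((s : ℚ) + t) / ((s' : ℚ) + t + 1))

private lemma Aa_nonneg (n k s : ℕ) : 0 ≤ Aa n k s := by
  unfold Aa
  apply mul_nonneg (by positivity)
  exact Finset.prod_nonneg fun t _ => by positivity

private lemma cc_nonneg (i s s' : ℕ) : 0 ≤ cc i s s' := by
  unfold cc
  apply mul_nonneg (by positivity)
  exact Finset.prod_nonneg fun t _ => by positivity

private lemma cc_anti (i s s' : ℕ) (hi : 1 ≤ i) (hss' : s ≤ s') :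
    cc (i + 1) s s' ≤ cc i s s' := by
  obtain ⟨m, rfl⟩ : ∃ m, i = m + 1 := ⟨i - 1, (Nat.succ_pred_eq_of_pos hi).symm⟩
  unfold cc
  simp only [Nat.add_sub_cancel]
  rw [Finset.prod_Icc_succ_top (by omega : 1 ≤ m + 1)]
  have hP : (0:ℚ) ≤ ∏ t ∈ Finset.Icc 1 m, (((s : ℚ) + t) / ((s' : ℚ) + t + 1)) :=
    Finset.prod_nonneg fun t _ => by positivity
  have hss : (s : ℚ) ≤ (s' : ℚ) := by exact_mod_cast hss'
  have hf : ((s : ℚ) + (m + 1 : ℕ)) / ((s' : ℚ) + (m + 1 : ℕ) + 1) ≤ 1 := by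
    rw [div_le_one (by positivity)]
    push_cast
    linarith
  have hf0 : (0:ℚ) ≤ ((s : ℚ) + (m + 1 : ℕ)) / ((s' : ℚ) + (m + 1 : ℕ) + 1) := by positivity
  have : (∏ t ∈ Finset.Icc 1 m, (((s : ℚ) + t) / ((s' : ℚ) + t + 1))) *
      (((s : ℚ) + (m + 1 : ℕ)) / ((s' : ℚ) + (m + 1 : ℕ) + 1)) ≤
      ∏ t ∈ Finset.Icc 1 m, (((s : ℚ) + t) / ((s' : ℚ) + t + 1)) := by
    calc _ ≤ (∏ t ∈ Finset.Icc 1 m, (((s : ℚ) + t) / ((s' : ℚ) + t + 1))) * 1 :=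
          mul_le_mul_of_nonneg_left hf hP
      _ = _ := mul_one _
  have h1 : (0:ℚ) ≤ 1 / ((s' : ℚ) + 1) := by positivity
  exact mul_le_mul_of_nonneg_left this h1

/-- Monotonicity of the backward-induction dual variables for the secretary problem with
samples: if `u` satisfies `u(n,s) = (1/(k+1))·∏_{t=1}^{n-1}(s+t)/(k+t+1)` and, for `i < n`,
`u(i,s) = max{0, a(i,s) − ∑_{j>i} ∑_{s'≥s} u(j,s')·(1/(s'+1))·∏_{t=1}^{i-1}(s+t)/(s'+t+1)}`
(where `a(i,s)` equals the same product, independent of `i`), then `u(i,s)` is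
non-decreasing in `i` for every fixed signal `s`. -/
theorem stmt_8 (n k : ℕ) (hn : 1 ≤ n) (u : ℕ → ℕ → ℚ)
    (hun : ∀ s ≤ k, u n s =
      (1 / ((k : ℚ) + 1)) * ∏ t ∈ Finset.Icc 1 (n - 1), (((s : ℚ) + t) / ((k : ℚ) + t + 1)))
    (hu : ∀ i, 1 ≤ i → i < n → ∀ s ≤ k, u i s =
      max 0 ((1 / ((k : ℚ) + 1)) * ∏ t ∈ Finset.Icc 1 (n - 1), (((s : ℚ) + t) / ((k : ℚ) + t + 1)) -
        ∑ j ∈ Finset.Icc (i + 1) n, ∑ s' ∈ Finset.Icc s k,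
          u j s' * ((1 / ((s' : ℚ) + 1)) *
            ∏ t ∈ Finset.Icc 1 (i - 1), (((s : ℚ) + t) / ((s' : ℚ) + t + 1))))) :
    ∀ i, 1 ≤ i → i < n → ∀ s ≤ k, u i s ≤ u (i + 1) s := by
  -- nonnegativity of u on the relevant range
  have hunn : ∀ j, 1 ≤ j → j ≤ n → ∀ s' ≤ k, 0 ≤ u j s' := by
    intro j hj1 hjn s' hs'
    rcases eq_or_lt_of_le hjn with h | h
    · rw [h, hun s' hs']; exact Aa_nonneg n k s'
    · rw [hu j hj1 h s' hs']; exact le_max_left _ _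
  intro i hi1 hin s hsk
  -- the subtracted sums
  set S : ℕ → ℚ := fun i => ∑ j ∈ Finset.Icc (i + 1) n, ∑ s' ∈ Finset.Icc s k,
      u j s' * cc i s s' with hSdef
  have hSnn : ∀ i', 1 ≤ i' → 0 ≤ S i' := by
    intro i' hi'
    apply Finset.sum_nonneg
    intro j hj
    apply Finset.sum_nonneg
    intro s' hs'
    simp only [Finset.mem_Icc] at hj hs'
    exact mul_nonneg (hunn j (by omega) hj.2 s' hs'.2) (cc_nonneg _ _ _)
  have hSmono : S (i + 1) ≤ S i := by
    have h1 : S (i + 1) ≤ ∑ j ∈ Finset.Icc (i + 2) n, ∑ s' ∈ Finset.Icc s k,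
        u j s' * cc i s s' := by
      apply Finset.sum_le_sum
      intro j hj
      apply Finset.sum_le_sum
      intro s' hs'
      simp only [Finset.mem_Icc] at hj hs'
      exact mul_le_mul_of_nonneg_left (cc_anti i s s' hi1 hs'.1)
        (hunn j (by omega) hj.2 s' hs'.2)
    have h2 : ∑ j ∈ Finset.Icc (i + 2) n, ∑ s' ∈ Finset.Icc s k,
        u j s' * cc i s s' ≤ S i := by
      apply Finset.sum_le_sum_of_subset_of_nonneg
      · exact Finset.Icc_subset_Icc_left (by omega)
      · intro j hj _
        apply Finset.sum_nonneg
        intro s' hs'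
        simp only [Finset.mem_Icc] at hj hs'
        exact mul_nonneg (hunn j (by omega) hj.2 s' hs'.2) (cc_nonneg _ _ _)
    exact h1.trans h2
  have hui : u i s = max 0 (Aa n k s - S i) := hu i hi1 hin s hsk
  rw [hui]
  rcases eq_or_lt_of_le (by omega : i + 1 ≤ n) with hcase | hcase
  · -- i + 1 = n
    rw [hcase, hun s hsk]
    show max 0 (Aa n k s - S i) ≤ Aa n k s
    exact max_le (Aa_nonneg n k s) (by linarith [hSnn i hi1])
  · rw [hu (i + 1) (by omega) hcase s hsk]
    show max 0 (Aa n k s - S i) ≤ max 0 (Aa n k s - S (i + 1))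
    exact max_le_max le_rfl (sub_le_sub_left hSmono _)
end

section
/- The greedy backward-induction dual solution for the Gilbert–Mosteller problem satisfies: u(n,s) = s^{n-1} for all s ∈ [0,1], and for i < n, u(i,s) = max{0, s^{i-1} · (s^{n-i} − ∑_{k=1}^{n-i} (1/k) · C(n-i, k) · s^{n-i-k} · (1-s)^k)}. -/
open intervalIntegral

noncomputable def GMH (m : ℕ) : ℝ := ∑ a ∈ Finset.Icc 1 m, (1 / (a:ℝ))
noncomputable def GMG (m : ℕ) (s : ℝ) : ℝ :=
  (1 + GMH m) * s ^ m - ∑ a ∈ Finset.Icc 1 m, s ^ (m - a) / a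

noncomputable def GMA (m : ℕ) (s : ℝ) : ℝ :=
  ∑ k ∈ Finset.Icc 1 m, (1 / (k:ℝ)) * (m.choose k : ℝ) * s ^ (m - k) * (1 - s) ^ k

lemma GM_Icc_succ (m : ℕ) : Finset.Icc 1 (m+1) = insert (m+1) (Finset.Icc 1 m) := by
  rw [← Finset.Ico_insert_right (by omega : 1 ≤ m+1), Finset.Ico_add_one_right_eq_Icc]

lemma GM_binom (m : ℕ) (s : ℝ) :
    ∑ k ∈ Finset.Icc 1 m, (m.choose k : ℝ) * s ^ (m - k) * (1 - s) ^ k = 1 - s ^ m := by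
  have h := add_pow (1 - s) s m
  simp only [sub_add_cancel, one_pow] at h
  have h3 : Finset.Icc 1 m = Finset.range (m+1) \ {0} := by
    ext x
    simp only [Finset.mem_Icc, Finset.mem_range, Finset.mem_sdiff, Finset.mem_singleton]
    omega
  rw [h3, Finset.sum_sdiff_eq_sub (by simp)]
  have : ∑ x ∈ Finset.range (m+1), (m.choose x : ℝ) * s ^ (m - x) * (1-s) ^ x
      = ∑ x ∈ Finset.range (m+1), (1 - s) ^ x * s ^ (m - x) * (m.choose x : ℝ) :=
    Finset.sum_congr rfl (fun x _ => by ring)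
  rw [this, ← h]
  simp

lemma GMA_rec (m : ℕ) (s : ℝ) :
    GMA (m+1) s = s * GMA m s + (1 - s ^ (m+1)) / (m+1) := by
  unfold GMA
  have key : ∀ k ∈ Finset.Icc 1 (m+1),
      (1 / (k:ℝ)) * ((m+1).choose k : ℝ) * s ^ (m+1-k) * (1-s) ^ k
      = (1 / (k:ℝ)) * (m.choose k : ℝ) * s ^ (m+1-k) * (1-s) ^ k
        + (1/((m:ℝ)+1)) * (((m+1).choose k : ℝ) * s ^ (m+1-k) * (1-s) ^ k) := by
    intro k hk
    simp only [Finset.mem_Icc] at hk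
    obtain ⟨hk1, hk2⟩ := hk
    obtain ⟨k', rfl⟩ : ∃ k', k = k' + 1 := ⟨k - 1, by omega⟩
    have hcs : (m+1).choose (k'+1) = m.choose (k'+1) + m.choose k' := by
      rw [Nat.choose_succ_succ']; omega
    have hmc : ((m:ℝ)+1) * (m.choose k' : ℝ) = ((m+1).choose (k'+1) : ℝ) * ((k':ℝ)+1) := by
      have h := Nat.add_one_mul_choose_eq m k'
      have h2 : ((Nat.succ m * m.choose k' : ℕ) : ℝ)
          = (((Nat.succ m).choose (Nat.succ k') * Nat.succ k' : ℕ) : ℝ) := by rw [h]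
      push_cast at h2
      push_cast
      linarith
    have hk0 : ((k':ℝ)+1) ≠ 0 := by positivity
    have hm0 : ((m:ℝ)+1) ≠ 0 := by positivity
    have hfrac : (m.choose k' : ℝ) / ((k':ℝ)+1)
        = ((m.choose (k'+1) : ℝ) + (m.choose k' : ℝ)) / ((m:ℝ)+1) := by
      rw [div_eq_div_iff hk0 hm0]
      have hcsR : ((m+1).choose (k'+1) : ℝ) = (m.choose (k'+1) : ℝ) + (m.choose k' : ℝ) := by
        rw [hcs]; push_cast; ring
      rw [← hcsR]
      linarith [hmc]
    have hexp : m + 1 - (k'+1) = m - k' := by omega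
    rw [hcs, hexp]
    push_cast
    linear_combination (s^(m-k')*(1-s)^(k'+1)) * hfrac
  rw [Finset.sum_congr rfl key, Finset.sum_add_distrib]
  congr 1
  · rw [Finset.mul_sum, GM_Icc_succ, Finset.sum_insert (by simp)]
    rw [Nat.choose_succ_self]
    simp only [Nat.cast_zero, mul_zero, zero_mul, zero_add]
    apply Finset.sum_congr rfl
    intro k hk
    simp only [Finset.mem_Icc] at hk
    have h1 : m + 1 - k = (m - k) + 1 := by omega
    rw [h1, pow_succ]
    ring
  · rw [← Finset.mul_sum, GM_binom]
    push_cast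
    field_simp

lemma GMH_rec (m : ℕ) : GMH (m+1) = GMH m + 1/((m:ℝ)+1) := by
  unfold GMH
  rw [GM_Icc_succ, Finset.sum_insert (by simp)]
  push_cast
  ring

lemma GMG_rec (m : ℕ) (s : ℝ) :
    GMG (m+1) s = s * GMG m s - (1 - s ^ (m+1)) / (m+1) := by
  unfold GMG
  rw [GM_Icc_succ, Finset.sum_insert (by simp), GMH_rec]
  have h0 : (m + 1 - (m+1)) = 0 := by omega
  rw [h0]
  have hsum : ∑ a ∈ Finset.Icc 1 m, s ^ (m + 1 - a) / (a:ℝ)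
      = s * ∑ a ∈ Finset.Icc 1 m, s ^ (m - a) / (a:ℝ) := by
    rw [Finset.mul_sum]
    apply Finset.sum_congr rfl
    intro a ha
    simp only [Finset.mem_Icc] at ha
    have : m + 1 - a = (m - a) + 1 := by omega
    rw [this, pow_succ]
    ring
  rw [hsum]
  have hm0 : ((m:ℝ)+1) ≠ 0 := by positivity
  have : s ^ (m+1) = s * s ^ m := by rw [pow_succ]; ring
  rw [this]
  push_cast
  field_simp
  ring

lemma GM_closed (m : ℕ) (s : ℝ) : s ^ m - GMA m s = GMG m s := by
  induction m with
  | zero => simp [GMA, GMG, GMH]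
  | succ m ih =>
    rw [GMA_rec, GMG_rec, ← ih]
    rw [pow_succ]
    ring

noncomputable def GMphi (m : ℕ) (s : ℝ) : ℝ :=
  1 + ∑ a ∈ Finset.Icc 1 m, (1 - (1/s) ^ a) / a

lemma GMG_eq_phi (m : ℕ) {s : ℝ} (hs : s ≠ 0) : GMG m s = s ^ m * GMphi m s := by
  unfold GMG GMphi GMH
  rw [mul_add, mul_one, Finset.mul_sum]
  have key : ∀ a ∈ Finset.Icc 1 m,
      s ^ m * ((1 - (1/s) ^ a) / a) = s ^ m * (1/(a:ℝ)) - s ^ (m-a) / a := by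
    intro a ha
    simp only [Finset.mem_Icc] at ha
    rw [pow_sub₀ s hs ha.2]
    rw [one_div, inv_pow]
    have ha0 : ((a:ℝ)) ≠ 0 := by
      have := ha.1; positivity
    have hsa : s ^ a ≠ 0 := pow_ne_zero _ hs
    field_simp
  rw [Finset.sum_congr rfl key, Finset.sum_sub_distrib]
  rw [add_mul, one_mul, Finset.sum_mul]
  have : ∀ a ∈ Finset.Icc 1 m, (1/(a:ℝ)) * s ^ m = s ^ m * (1/(a:ℝ)) :=
    fun a _ => by ring
  rw [Finset.sum_congr rfl this]
  ring


lemma GMphi_term_nonpos {a : ℕ} {s : ℝ} (h0 : 0 < s) (h1 : s ≤ 1) :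
    (1 - (1/s) ^ a) / (a:ℝ) ≤ 0 := by
  apply div_nonpos_of_nonpos_of_nonneg
  · have hd : (1:ℝ) ≤ 1/s := one_le_one_div h0 h1
    have : (1:ℝ) ≤ (1/s)^a := one_le_pow₀ hd
    linarith
  · positivity

lemma GMphi_anti_m {m m' : ℕ} (h : m' ≤ m) {s : ℝ} (h0 : 0 < s) (h1 : s ≤ 1) :
    GMphi m s ≤ GMphi m' s := by
  unfold GMphi
  have hsub : Finset.Icc 1 m' ⊆ Finset.Icc 1 m := Finset.Icc_subset_Icc_right h
  have hneg := Finset.sum_le_sum_of_subset_of_nonneg hsub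
    (f := fun a : ℕ => -((1 - (1/s) ^ a) / a))
    (fun a _ _ => neg_nonneg.mpr (GMphi_term_nonpos h0 h1))
  simp only [Finset.sum_neg_distrib, neg_le_neg_iff] at hneg
  linarith

lemma GMphi_mono_s (m : ℕ) {s q : ℝ} (h0 : 0 < s) (hsq : s ≤ q) :
    GMphi m s ≤ GMphi m q := by
  unfold GMphi
  have hq0 : 0 < q := lt_of_lt_of_le h0 hsq
  have key : ∀ a ∈ Finset.Icc 1 m, (1 - (1/s) ^ a) / (a:ℝ) ≤ (1 - (1/q) ^ a) / a := by
    intro a ha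
    simp only [Finset.mem_Icc] at ha
    have ha0 : (0:ℝ) < (a:ℝ) := by exact_mod_cast ha.1
    rw [div_le_div_iff_of_pos_right ha0]
    have hp : (1/q)^a ≤ (1/s)^a :=
      pow_le_pow_left₀ (by positivity) (one_div_le_one_div_of_le h0 hsq) a
    linarith
  have := Finset.sum_le_sum key
  linarith

lemma GMG_nonneg_up {m m' : ℕ} (hmm : m' ≤ m) {s q : ℝ} (h0 : 0 < s) (hsq : s ≤ q)
    (hq1 : q ≤ 1) (hG : 0 ≤ GMG m s) : 0 ≤ GMG m' q := by
  have hs1 : s ≤ 1 := hsq.trans hq1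
  have hq0 : 0 < q := lt_of_lt_of_le h0 hsq
  have hphi : 0 ≤ GMphi m s := by
    rw [GMG_eq_phi m (ne_of_gt h0)] at hG
    exact nonneg_of_mul_nonneg_right hG (pow_pos h0 m)
  have h2 : GMphi m s ≤ GMphi m' s := GMphi_anti_m hmm h0 hs1
  have h3 : GMphi m' s ≤ GMphi m' q := GMphi_mono_s m' h0 hsq
  rw [GMG_eq_phi m' (ne_of_gt hq0)]
  have : 0 ≤ GMphi m' q := by linarith
  positivity

lemma GMG_nonpos_up_m {m m' : ℕ} (hmm : m' ≤ m) {s : ℝ} (h0 : 0 < s) (h1 : s ≤ 1)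
    (hG : GMG m' s ≤ 0) : GMG m s ≤ 0 := by
  have hphi : GMphi m' s ≤ 0 := by
    rw [GMG_eq_phi m' (ne_of_gt h0)] at hG
    by_contra hc
    push_neg at hc
    nlinarith [pow_pos h0 m']
  have h2 : GMphi m s ≤ GMphi m' s := GMphi_anti_m hmm h0 h1
  rw [GMG_eq_phi m (ne_of_gt h0)]
  have hp : (0:ℝ) ≤ s ^ m := le_of_lt (pow_pos h0 m)
  nlinarith

lemma GMG_zero {m : ℕ} (hm : 1 ≤ m) : GMG m 0 = -(1/(m:ℝ)) := by
  unfold GMG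
  rw [zero_pow (by omega), mul_zero]
  rw [Finset.sum_eq_single m]
  · simp
  · intro a ha hne
    simp only [Finset.mem_Icc] at ha
    rw [zero_pow (by omega)]
    simp
  · intro h
    simp only [Finset.mem_Icc] at h
    omega

lemma GMG_one (m : ℕ) : GMG m 1 = 1 := by
  unfold GMG GMH
  simp

lemma GMG_continuous (m : ℕ) : Continuous (GMG m) := by
  unfold GMG
  exact (continuous_const.mul (continuous_pow m)).sub
    (continuous_finset_sum _ fun a _ => (continuous_pow _).div_const _)

lemma GMG_root {m : ℕ} (hm : 1 ≤ m) : ∃ d, 0 < d ∧ d ≤ 1 ∧ GMG m d = 0 := by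
  have h01 : (0:ℝ) ≤ 1 := by norm_num
  have hsub := intermediate_value_Icc h01 (GMG_continuous m).continuousOn
  have h0 : GMG m 0 = -(1/(m:ℝ)) := GMG_zero hm
  have hmem : (0:ℝ) ∈ Set.Icc (GMG m 0) (GMG m 1) := by
    rw [h0, GMG_one]
    constructor
    · have : (0:ℝ) < (m:ℝ) := by exact_mod_cast hm
      have : (0:ℝ) < 1/(m:ℝ) := by positivity
      linarith
    · norm_num
  obtain ⟨d, hd, hGd⟩ := hsub hmem
  refine ⟨d, ?_, hd.2, hGd⟩
  rcases eq_or_lt_of_le hd.1 with h | h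
  · exfalso
    rw [← h] at hGd
    rw [GMG_zero hm] at hGd
    have : (0:ℝ) < (m:ℝ) := by exact_mod_cast hm
    have : (0:ℝ) < 1/(m:ℝ) := by positivity
    linarith
  · exact h

lemma GM_swap (m : ℕ) (f : ℕ → ℝ) :
    ∑ r ∈ Finset.range m, ∑ a ∈ Finset.Icc 1 r, f a
      = ∑ a ∈ Finset.Icc 1 (m-1), ((m - a : ℕ) : ℝ) * f a := by
  induction m with
  | zero => simp
  | succ m ih =>
    rw [Finset.sum_range_succ, ih]
    rcases Nat.eq_zero_or_pos m with hm | hm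
    · subst hm; simp
    · have hmm : m - 1 + 1 = m := by omega
      have hIns : Finset.Icc 1 m = insert m (Finset.Icc 1 (m-1)) := by
        rw [← hmm, GM_Icc_succ, hmm]
      have hzero : ((m - m : ℕ) : ℝ) * f m = 0 := by simp
      have hstep : ∑ a ∈ Finset.Icc 1 (m-1), ((m - a : ℕ) : ℝ) * f a
          = ∑ a ∈ Finset.Icc 1 m, ((m - a : ℕ) : ℝ) * f a := by
        rw [hIns, Finset.sum_insert (by simp; omega), hzero, zero_add]
      rw [hstep, Nat.succ_sub_one, ← Finset.sum_add_distrib]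
      apply Finset.sum_congr rfl
      intro a ha
      simp only [Finset.mem_Icc] at ha
      have : ((m + 1 - a : ℕ) : ℝ) = ((m - a : ℕ) : ℝ) + 1 := by
        have h1 : m + 1 - a = (m - a) + 1 := by omega
        rw [h1]; push_cast; ring
      rw [this]; ring

noncomputable def GMT (m r : ℕ) (s : ℝ) : ℝ :=
  (1 + GMH r) * ((1 - s^m)/(m:ℝ))
    - ∑ a ∈ Finset.Icc 1 r, (1 - s^(m-a))/((a:ℝ) * ((m - a : ℕ):ℝ))

lemma GM_grand (m : ℕ) (hm : 1 ≤ m) (s : ℝ) :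
    s^m - ∑ r ∈ Finset.range m, GMT m r s = GMG m s := by
  have hm0 : ((m:ℝ)) ≠ 0 := by
    have : (0:ℝ) < m := by exact_mod_cast hm
    linarith
  unfold GMT
  rw [Finset.sum_sub_distrib]
  -- first sum
  have h1 : ∑ r ∈ Finset.range m, (1 + GMH r) * ((1 - s^m)/(m:ℝ))
      = (1 - s^m) * GMH m := by
    rw [← Finset.sum_mul]
    have hH : ∑ r ∈ Finset.range m, (1 + GMH r) = (m:ℝ) * GMH m := by
      rw [Finset.sum_add_distrib, Finset.sum_const, Finset.card_range]
      have hswap := GM_swap m (fun a => 1/(a:ℝ))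
      unfold GMH
      unfold GMH at hswap
      rw [hswap]
      have hmm : m - 1 + 1 = m := by omega
      have hIns : Finset.Icc 1 m = insert m (Finset.Icc 1 (m-1)) := by
        rw [← hmm, GM_Icc_succ, hmm]
      have hstep : ∑ a ∈ Finset.Icc 1 (m-1), ((m - a : ℕ) : ℝ) * (1/(a:ℝ))
          = ∑ a ∈ Finset.Icc 1 m, ((m - a : ℕ) : ℝ) * (1/(a:ℝ)) := by
        rw [hIns, Finset.sum_insert (by simp; omega)]
        simp
      rw [hstep, Finset.mul_sum]
      have hcard : (Finset.Icc 1 m).card = m := by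
        rw [Nat.card_Icc]; omega
      have hsplit : ∀ a ∈ Finset.Icc 1 m,
          ((m - a : ℕ) : ℝ) * (1/(a:ℝ)) = (m:ℝ) * (1/(a:ℝ)) - 1 := by
        intro a ha
        simp only [Finset.mem_Icc] at ha
        have ha0 : ((a:ℝ)) ≠ 0 := by
          have : (0:ℝ) < a := by exact_mod_cast ha.1
          linarith
        have : ((m - a : ℕ) : ℝ) = (m:ℝ) - (a:ℝ) := by
          have := ha.2; push_cast [Nat.cast_sub this]; ring
        rw [this]
        field_simp
      rw [Finset.sum_congr rfl hsplit, Finset.sum_sub_distrib, Finset.sum_const, hcard]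
      simp
    rw [hH]
    field_simp
  -- second sum
  have h2 : ∑ r ∈ Finset.range m, ∑ a ∈ Finset.Icc 1 r,
        (1 - s^(m-a))/((a:ℝ) * ((m - a : ℕ):ℝ))
      = ∑ a ∈ Finset.Icc 1 (m-1), (1 - s^(m-a))/(a:ℝ) := by
    rw [GM_swap]
    apply Finset.sum_congr rfl
    intro a ha
    simp only [Finset.mem_Icc] at ha
    have hma : 1 ≤ m - a := by omega
    have hma0 : (((m - a : ℕ)):ℝ) ≠ 0 := by
      have : (0:ℝ) < ((m-a:ℕ):ℝ) := by exact_mod_cast hma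
      linarith
    have ha0 : ((a:ℝ)) ≠ 0 := by
      have : (0:ℝ) < (a:ℝ) := by exact_mod_cast ha.1
      linarith
    field_simp
  rw [h1, h2]
  -- now pure algebra
  unfold GMG
  have hmm : m - 1 + 1 = m := by omega
  have hIns : Finset.Icc 1 m = insert m (Finset.Icc 1 (m-1)) := by
    rw [← hmm, GM_Icc_succ, hmm]
  have hHm : GMH m = GMH (m-1) + 1/(m:ℝ) := by
    unfold GMH
    rw [hIns, Finset.sum_insert (by simp; omega)]
    ring
  rw [hIns, Finset.sum_insert (by simp; omega)]
  have hsub0 : m - m = 0 := by omega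
  rw [hsub0, pow_zero, hHm]
  have hfin : ∑ a ∈ Finset.Icc 1 (m-1), (1 - s^(m-a))/(a:ℝ)
      = ∑ a ∈ Finset.Icc 1 (m-1), (1/(a:ℝ)) - ∑ a ∈ Finset.Icc 1 (m-1), s^(m-a)/(a:ℝ) := by
    rw [← Finset.sum_sub_distrib]
    apply Finset.sum_congr rfl
    intro a ha
    ring
  rw [hfin]
  unfold GMH
  ring

open intervalIntegral in
lemma GM_integral_eval (n i j : ℕ) (hi : 1 ≤ i) (hij : i < j) (hjn : j ≤ n)
    {s : ℝ} (h0 : 0 < s) (h1 : s ≤ 1)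
    (hpos : ∀ q ∈ Set.Icc s 1, 0 ≤ GMG (n-j) q) :
    (∫ q in s..1, max 0 (q^(j-1) * GMG (n-j) q) * (1/q) * (s/q)^(i-1))
      = s^(i-1) * GMT (n-i) (n-j) s := by
  have huIcc : Set.uIcc s 1 = Set.Icc s 1 := Set.uIcc_of_le h1
  have hcongr : Set.EqOn
      (fun q => max 0 (q^(j-1) * GMG (n-j) q) * (1/q) * (s/q)^(i-1))
      (fun q => s^(i-1) * ((1 + GMH (n-j)) * q^(n-i-1)
        - ∑ a ∈ Finset.Icc 1 (n-j), q^(n-i-1-a)/(a:ℝ)))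
      (Set.uIcc s 1) := by
    rw [huIcc]
    intro q hq
    obtain ⟨hqs, hq1⟩ := hq
    have hq0 : 0 < q := lt_of_lt_of_le h0 hqs
    have hqne : q ≠ 0 := ne_of_gt hq0
    simp only
    have hmax : max 0 (q^(j-1) * GMG (n-j) q) = q^(j-1) * GMG (n-j) q := by
      apply max_eq_right
      have := hpos q ⟨hqs, hq1⟩
      positivity
    rw [hmax, div_pow]
    have e1 : q^(j-1) * GMG (n-j) q * (1/q) * (s^(i-1)/q^(i-1))
        = s^(i-1) * (q^(j-1-i) * GMG (n-j) q) := by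
      have hji : i ≤ j - 1 := by omega
      rw [pow_sub₀ q hqne hji]
      have hii : q^i = q * q^(i-1) := by
        conv_lhs => rw [show i = (i-1)+1 by omega]
        rw [pow_succ]
        ring
      rw [hii]
      have hq1ne : q^(i-1) ≠ 0 := pow_ne_zero _ hqne
      field_simp
    rw [e1]
    congr 1
    unfold GMG
    rw [mul_sub, Finset.mul_sum]
    congr 1
    · rw [mul_comm (q^(j-1-i)), mul_assoc, ← pow_add]
      congr 2
      omega
    · apply Finset.sum_congr rfl
      intro a ha
      simp only [Finset.mem_Icc] at ha
      rw [div_eq_mul_inv, div_eq_mul_inv, ← mul_assoc, ← pow_add]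
      congr 2
      omega
  rw [intervalIntegral.integral_congr hcongr]
  have hint1 : IntervalIntegrable
      (fun q : ℝ => (1 + GMH (n-j)) * q^(n-i-1)) MeasureTheory.volume s 1 :=
    (continuous_const.mul (continuous_pow _)).intervalIntegrable _ _
  have hint2 : IntervalIntegrable
      (fun q : ℝ => ∑ a ∈ Finset.Icc 1 (n-j), q^(n-i-1-a)/(a:ℝ)) MeasureTheory.volume s 1 :=
    (continuous_finset_sum _ fun a _ => (continuous_pow _).div_const _).intervalIntegrable _ _
  rw [intervalIntegral.integral_const_mul, intervalIntegral.integral_sub hint1 hint2]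
  rw [intervalIntegral.integral_const_mul]
  rw [intervalIntegral.integral_finset_sum
    (fun a _ => ((continuous_pow _).div_const _).intervalIntegrable _ _)]
  unfold GMT
  congr 2
  · rw [integral_pow]
    have hc : n - i - 1 + 1 = n - i := by omega
    rw [hc]
    have hc2 : ((n - i - 1 : ℕ) : ℝ) + 1 = ((n - i : ℕ) : ℝ) := by
      have : (n - i - 1 : ℕ) + 1 = (n-i : ℕ) := by omega
      exact_mod_cast congrArg (Nat.cast : ℕ → ℝ) this
    rw [hc2, one_pow]
  · apply Finset.sum_congr rfl
    intro a ha
    simp only [Finset.mem_Icc] at ha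
    rw [intervalIntegral.integral_div, integral_pow]
    have hc : n - i - 1 - a + 1 = n - i - a := by omega
    rw [hc]
    have hc2 : ((n - i - 1 - a : ℕ) : ℝ) + 1 = ((n - i - a : ℕ) : ℝ) := by
      have : (n - i - 1 - a : ℕ) + 1 = (n - i - a : ℕ) := by omega
      exact_mod_cast congrArg (Nat.cast : ℕ → ℝ) this
    rw [hc2, one_pow]
    have hma : ((n - i - a : ℕ):ℝ) = (((n-i) - a : ℕ):ℝ) := by
      congr 1
    rw [hma]
    have haa : ((a:ℝ)) ≠ 0 := by
      have : (0:ℝ) < (a:ℝ) := by exact_mod_cast ha.1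
      linarith
    have hmb : (((n-i) - a : ℕ):ℝ) ≠ 0 := by
      have h' : 1 ≤ (n-i) - a := by omega
      have : (0:ℝ) < (((n-i)-a:ℕ):ℝ) := by exact_mod_cast h'
      linarith
    rw [div_div, mul_comm]

lemma GM_reindex (n i : ℕ) (hin : i ≤ n) (F : ℕ → ℝ) :
    ∑ j ∈ Finset.Icc (i+1) n, F (n-j) = ∑ r ∈ Finset.range (n-i), F r := by
  apply Finset.sum_nbij' (i := fun j => n - j) (j := fun r => n - r)
  · intro a ha; simp only [Finset.mem_Icc] at ha; simp only [Finset.mem_range]; omega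
  · intro a ha; simp only [Finset.mem_range] at ha; simp only [Finset.mem_Icc]; omega
  · intro a ha; simp only [Finset.mem_Icc] at ha; omega
  · intro a ha; simp only [Finset.mem_range] at ha; omega
  · intro a ha; rfl

lemma GMG_zero_eq_one (s : ℝ) : GMG 0 s = 1 := by
  unfold GMG GMH; simp

lemma GM_split (i : ℕ) (t X q : ℝ) :
    max 0 X * (1/q) * (t/q)^(i-1) = t^(i-1) * (max 0 X * (1/q) * (1/q)^(i-1)) := by
  rw [div_eq_mul_one_div t q, mul_pow]
  ring

/-- Closed form of the greedy backward-induction dual solution for the Gilbert–Mosteller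
problem (Corollary 5.4): if `u` satisfies the backward recursion `u(n,s) = s^{n-1}` and,
for `1 ≤ i < n`, `u(i,s) = max{0, s^{n-1} − ∑_{j>i} ∫_s^1 u(j,q')·(1/q')·(s/q')^{i-1} dq'}`,
then `u(n,s) = s^{n-1}` and for `i < n`,
`u(i,s) = max{0, s^{i-1}·(s^{n-i} − ∑_{k=1}^{n-i} (1/k)·C(n-i,k)·s^{n-i-k}·(1-s)^k)}`. -/
theorem stmt_9 (n : ℕ) (hn : 1 ≤ n) (u : ℕ → ℝ → ℝ)
    (hun : ∀ s ∈ Set.Icc (0 : ℝ) 1, u n s = s ^ (n - 1))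
    (hu : ∀ i, 1 ≤ i → i < n → ∀ s ∈ Set.Icc (0 : ℝ) 1, u i s =
      max 0 (s ^ (n - 1) - ∑ j ∈ Finset.Icc (i + 1) n,
        ∫ q' in s..1, u j q' * (1 / q') * (s / q') ^ (i - 1))) :
    (∀ s ∈ Set.Icc (0 : ℝ) 1, u n s = s ^ (n - 1)) ∧
    (∀ i, 1 ≤ i → i < n → ∀ s ∈ Set.Icc (0 : ℝ) 1, u i s =
      max 0 (s ^ (i - 1) * (s ^ (n - i) - ∑ k ∈ Finset.Icc 1 (n - i),
        (1 / (k : ℝ)) * ((n - i).choose k : ℝ) * s ^ (n - i - k) * (1 - s) ^ k))) := by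
  have main : ∀ k, ∀ i, 1 ≤ i → i ≤ n → n - i = k → ∀ s ∈ Set.Icc (0:ℝ) 1,
      u i s = max 0 (s^(i-1) * GMG (n-i) s) := by
    intro k
    induction k using Nat.strong_induction_on with
    | _ k ih =>
      intro i hi1 hin hk s hs
      obtain ⟨hs0, hs1⟩ := hs
      rcases eq_or_lt_of_le hin with heq | hlt
      · -- i = n
        subst heq
        rw [hun s ⟨hs0, hs1⟩, Nat.sub_self, GMG_zero_eq_one, mul_one]
        exact (max_eq_right (by positivity)).symm
      · -- i < n
        rw [hu i hi1 hlt s ⟨hs0, hs1⟩]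
        have hrw : ∀ j ∈ Finset.Icc (i+1) n,
            (∫ q' in s..1, u j q' * (1/q') * (s/q')^(i-1))
            = ∫ q' in s..1, (max 0 (q'^(j-1) * GMG (n-j) q')) * (1/q') * (s/q')^(i-1) := by
          intro j hj
          simp only [Finset.mem_Icc] at hj
          apply intervalIntegral.integral_congr
          intro q hq
          rw [Set.uIcc_of_le hs1] at hq
          have hq01 : q ∈ Set.Icc (0:ℝ) 1 := ⟨le_trans hs0 hq.1, hq.2⟩
          have hih := ih (n - j) (by omega) j (by omega) (by omega) rfl q hq01
          simp only
          rw [hih]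
        rw [Finset.sum_congr rfl hrw]
        by_cases hzero : s = 0
        · -- s = 0
          subst hzero
          by_cases hi1' : i = 1
          · -- i = 1
            subst hi1'
            have hn2 : 2 ≤ n := by omega
            have hz : (0:ℝ)^(n-1) = 0 := zero_pow (by omega)
            have hI : ∀ j ∈ Finset.Icc (1+1) n,
                0 ≤ ∫ q' in (0:ℝ)..1, (max 0 (q'^(j-1) * GMG (n-j) q')) * (1/q') * ((0:ℝ)/q')^(1-1) := by
              intro j hj
              apply intervalIntegral.integral_nonneg (by norm_num)
              intro q hq
              simp only [Nat.sub_self, pow_zero, mul_one]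
              apply mul_nonneg (le_max_left 0 _)
              exact one_div_nonneg.mpr hq.1
            have hle1 : (0:ℝ)^(n-1) - ∑ j ∈ Finset.Icc (1+1) n,
                (∫ q' in (0:ℝ)..1, (max 0 (q'^(j-1) * GMG (n-j) q')) * (1/q') * ((0:ℝ)/q')^(1-1)) ≤ 0 := by
              rw [hz]
              have := Finset.sum_nonneg hI
              linarith
            rw [max_eq_left hle1]
            have hG0 : GMG (n-1) 0 = -(1/((n-1:ℕ):ℝ)) := GMG_zero (by omega)
            rw [Nat.sub_self, pow_zero, one_mul, hG0]
            have hcastpos : (0:ℝ) < ((n-1:ℕ):ℝ) := by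
              have : 1 ≤ n - 1 := by omega
              exact_mod_cast this
            have hrecpos : (0:ℝ) < 1/((n-1:ℕ):ℝ) := by positivity
            rw [max_eq_left (by linarith)]
          · -- i ≥ 2
            have hi2 : 2 ≤ i := by omega
            have hIz : ∀ j ∈ Finset.Icc (i+1) n,
                (∫ q' in (0:ℝ)..1, (max 0 (q'^(j-1) * GMG (n-j) q')) * (1/q') * ((0:ℝ)/q')^(i-1)) = 0 := by
              intro j hj
              have : ∀ q' : ℝ, (max 0 (q'^(j-1) * GMG (n-j) q')) * (1/q') * ((0:ℝ)/q')^(i-1) = 0 := by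
                intro q'
                rw [zero_div, zero_pow (by omega : i - 1 ≠ 0), mul_zero]
              simp only [this, intervalIntegral.integral_zero]
            rw [Finset.sum_congr rfl hIz, Finset.sum_const_zero, sub_zero,
              zero_pow (by omega : n - 1 ≠ 0), zero_pow (by omega : i - 1 ≠ 0), zero_mul]
        · -- 0 < s
          have hs0' : 0 < s := lt_of_le_of_ne hs0 (Ne.symm hzero)
          by_cases hA : 0 ≤ GMG (n-(i+1)) s
          · -- Case 1: closed-form evaluation
            have heval : ∀ j ∈ Finset.Icc (i+1) n,
                (∫ q' in s..1, (max 0 (q'^(j-1) * GMG (n-j) q')) * (1/q') * (s/q')^(i-1))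
                = s^(i-1) * GMT (n-i) (n-j) s := by
              intro j hj
              simp only [Finset.mem_Icc] at hj
              apply GM_integral_eval n i j hi1 (by omega) hj.2 hs0' hs1
              intro q hq
              exact GMG_nonneg_up (by omega : n-j ≤ n-(i+1)) hs0' hq.1 hq.2 hA
            rw [Finset.sum_congr rfl heval, ← Finset.mul_sum,
              GM_reindex n i (le_of_lt hlt) (fun r => GMT (n-i) r s)]
            congr 1
            have hgrand := GM_grand (n-i) (by omega) s
            have hpow : s^(n-1) = s^(i-1) * s^(n-i) := by
              rw [← pow_add]
              congr 1
              omega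
            rw [hpow, ← hgrand]
            ring
          · -- Case 2: below threshold, both sides are 0
            push_neg at hA
            have hnm : 1 ≤ n - (i+1) := by
              by_contra hc
              have h0' : n - (i+1) = 0 := by omega
              rw [h0', GMG_zero_eq_one] at hA
              linarith
            obtain ⟨d, hd0, hd1, hdroot⟩ := GMG_root hnm
            have hsd : s ≤ d := by
              by_contra hc
              push_neg at hc
              have := GMG_nonneg_up (le_refl (n-(i+1))) hd0 (le_of_lt hc) hs1
                (le_of_eq hdroot.symm)
              linarith
            have hGm : GMG (n-i) s ≤ 0 :=
              GMG_nonpos_up_m (by omega : n-(i+1) ≤ n-i) hs0' hs1 (le_of_lt hA)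
            have hGmd : GMG (n-i) d ≤ 0 :=
              GMG_nonpos_up_m (by omega : n-(i+1) ≤ n-i) hd0 hd1 (le_of_eq hdroot)
            -- abbreviation for the s-free integrand
            set h : ℕ → ℝ → ℝ :=
              fun j q => max 0 (q^(j-1) * GMG (n-j) q) * (1/q) * (1/q)^(i-1) with hdef
            have hIj : ∀ (t : ℝ) (j : ℕ),
                (∫ q in t..1, (max 0 (q^(j-1) * GMG (n-j) q)) * (1/q) * (t/q)^(i-1))
                = t^(i-1) * ∫ q in t..1, h j q := by
              intro t j
              rw [← intervalIntegral.integral_const_mul]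
              apply intervalIntegral.integral_congr
              intro q _
              simp only [hdef]
              exact GM_split i t _ q
            -- continuity and integrability of h j on [s,1]
            have hcont : ∀ j, ContinuousOn (h j) (Set.Icc s 1) := by
              intro j
              have hne : ∀ q ∈ Set.Icc s 1, q ≠ 0 :=
                fun q hq => ne_of_gt (lt_of_lt_of_le hs0' hq.1)
              have c1 : Continuous fun q : ℝ => max 0 (q^(j-1) * GMG (n-j) q) :=
                continuous_const.max ((continuous_pow _).mul (GMG_continuous _))
              have c2 : ContinuousOn (fun q : ℝ => 1/q) (Set.Icc s 1) :=
                ContinuousOn.div continuousOn_const continuousOn_id hne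
              exact (c1.continuousOn.mul c2).mul (c2.pow _)
            have hint1 : ∀ j, IntervalIntegrable (h j) MeasureTheory.volume s d := by
              intro j
              apply ContinuousOn.intervalIntegrable
              apply (hcont j).mono
              rw [Set.uIcc_of_le hsd]
              exact Set.Icc_subset_Icc_right hd1
            have hint2 : ∀ j, IntervalIntegrable (h j) MeasureTheory.volume d 1 := by
              intro j
              apply ContinuousOn.intervalIntegrable
              apply (hcont j).mono
              rw [Set.uIcc_of_le hd1]
              exact Set.Icc_subset_Icc_left hsd
            have hJsplit : ∀ j, (∫ q in s..1, h j q)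
                = (∫ q in s..d, h j q) + ∫ q in d..1, h j q :=
              fun j => (integral_add_adjacent_intervals (hint1 j) (hint2 j)).symm
            have hJnonneg : ∀ j, 0 ≤ ∫ q in s..d, h j q := by
              intro j
              apply intervalIntegral.integral_nonneg hsd
              intro q hq
              have hq0 : 0 < q := lt_of_lt_of_le hs0' hq.1
              simp only [hdef]
              apply mul_nonneg (mul_nonneg (le_max_left 0 _) ?_) ?_
              · exact one_div_nonneg.mpr (le_of_lt hq0)
              · exact pow_nonneg (one_div_nonneg.mpr (le_of_lt hq0)) _
            -- value of ∫_d^1 h j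
            have hevald : ∀ j ∈ Finset.Icc (i+1) n,
                (∫ q in d..1, h j q) = GMT (n-i) (n-j) d := by
              intro j hj
              simp only [Finset.mem_Icc] at hj
              have h1' := GM_integral_eval n i j hi1 (by omega) hj.2 hd0 hd1
                (fun q hq => GMG_nonneg_up (by omega : n-j ≤ n-(i+1)) hd0 hq.1 hq.2
                  (le_of_eq hdroot.symm))
              rw [hIj d j] at h1'
              exact mul_left_cancel₀ (pow_ne_zero _ (ne_of_gt hd0)) h1'
            -- conclude: E ≤ 0
            have hle1 : s^(n-1) - ∑ j ∈ Finset.Icc (i+1) n,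
                (∫ q' in s..1, (max 0 (q'^(j-1) * GMG (n-j) q')) * (1/q') * (s/q')^(i-1)) ≤ 0 := by
              have hIeq : ∀ j ∈ Finset.Icc (i+1) n,
                  (∫ q' in s..1, (max 0 (q'^(j-1) * GMG (n-j) q')) * (1/q') * (s/q')^(i-1))
                  = s^(i-1) * ∫ q in s..1, h j q := fun j _ => hIj s j
              rw [Finset.sum_congr rfl hIeq, ← Finset.mul_sum]
              have hsum_ge : ∑ j ∈ Finset.Icc (i+1) n, (∫ q in s..1, h j q)
                  ≥ ∑ j ∈ Finset.Icc (i+1) n, GMT (n-i) (n-j) d := by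
                apply Finset.sum_le_sum
                intro j hj
                rw [hJsplit j, ← hevald j hj]
                linarith [hJnonneg j]
              have hre : ∑ j ∈ Finset.Icc (i+1) n, GMT (n-i) (n-j) d
                  = ∑ r ∈ Finset.range (n-i), GMT (n-i) r d :=
                GM_reindex n i (le_of_lt hlt) (fun r => GMT (n-i) r d)
              have hgrand := GM_grand (n-i) (by omega) d
              have hdm : s^(n-i) ≤ d^(n-i) := pow_le_pow_left₀ hs0 hsd _
              have hpow : s^(n-1) = s^(i-1) * s^(n-i) := by
                rw [← pow_add]
                congr 1
                omega
              rw [hpow]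
              have hkey : s^(n-i) - ∑ j ∈ Finset.Icc (i+1) n, (∫ q in s..1, h j q) ≤ 0 := by
                have h5 : s^(n-i) - ∑ j ∈ Finset.Icc (i+1) n, (∫ q in s..1, h j q)
                    ≤ d^(n-i) - ∑ r ∈ Finset.range (n-i), GMT (n-i) r d := by
                  rw [← hre]
                  linarith
                rw [hgrand] at h5
                linarith
              have hsp : (0:ℝ) ≤ s^(i-1) := pow_nonneg hs0 _
              nlinarith
            have hle2 : s^(i-1) * GMG (n-i) s ≤ 0 := by
              have hsp : (0:ℝ) ≤ s^(i-1) := pow_nonneg hs0 _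
              nlinarith
            rw [max_eq_left hle1, max_eq_left hle2]
  constructor
  · exact hun
  · intro i hi1 hin s hs
    rw [main (n-i) i hi1 (le_of_lt hin) rfl s hs]
    congr 1
    have hclosed := GM_closed (n-i) s
    unfold GMA at hclosed
    rw [← hclosed]
end

section
/- The function f(p) = ((1-p)/p)^{(1-p)/p} · e^{p - 1/p} is strictly increasing on (1/2, 1), with f(1/2) = 1/e and lim_{p→1⁻} f(p) = 1. -/
/-!
With `t = (1 - p) / p` one has `1 - 1 / p = -t`, so the ratio is
`t ^ t * e ^ (-t) = exp (t log t - t)`. The map `p ↦ t` is decreasing and sends `(1/2, 1)` into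
`(0, 1)`, where `t log t - t` is decreasing (its derivative is `log t < 0`); and `t → 0` as
`p → 1`, where `t log t - t → 0`.
-/

open Filter Real

lemma rpow_self_mul_exp_neg {t : ℝ} (ht : 0 ≤ t) : t ^ t * exp (-t) = exp (t * log t - t) := by
  rcases ht.eq_or_lt with rfl | ht
  · simp
  · rw [rpow_def_of_pos ht, ← exp_add, mul_comm (log t), sub_eq_add_neg]

lemma strictAntiOn_mul_log_sub_self : StrictAntiOn (fun t : ℝ => t * log t - t) (Set.Icc 0 1) := by
  refine strictAntiOn_of_deriv_neg (convex_Icc 0 1)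
    (continuous_mul_log.sub continuous_id).continuousOn fun t ht => ?_
  rw [interior_Icc] at ht
  have hderiv : HasDerivAt (fun t : ℝ => t * log t - t) (log t + 1 - 1) t :=
    (hasDerivAt_mul_log ht.1.ne').sub (hasDerivAt_id t)
  rw [hderiv.deriv, add_sub_cancel_right]
  exact log_neg ht.1 ht.2

lemma one_sub_div_self_mem_Icc {p : ℝ} (hp : p ∈ Set.Icc (1 / 2) 1) :
    (1 - p) / p ∈ Set.Icc 0 1 := by
  obtain ⟨hp₁, hp₂⟩ := hp
  have hp₀ : 0 < p := by linarith
  exact ⟨div_nonneg (by linarith) hp₀.le, (div_le_one hp₀).2 (by linarith)⟩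

lemma strictAntiOn_one_sub_div_self : StrictAntiOn (fun p : ℝ => (1 - p) / p) (Set.Ioi 0) := by
  intro p (hp : 0 < p) q (hq : 0 < q) hpq
  simp only [sub_div, div_self hp.ne', div_self hq.ne']
  exact sub_lt_sub_right (one_div_lt_one_div_of_lt hp hpq) 1

lemma ratio_eq_exp {p : ℝ} (hp₀ : 0 < p) (hp₁ : p ≤ 1) :
    ((1 - p) / p) ^ ((1 - p) / p) * exp (1 - 1 / p) =
      exp ((1 - p) / p * log ((1 - p) / p) - (1 - p) / p) := by
  rw [← rpow_self_mul_exp_neg (div_nonneg (sub_nonneg.2 hp₁) hp₀.le), sub_div, div_self hp₀.ne',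
    neg_sub]

lemma tendsto_one_sub_div_self_nhds_one : Tendsto (fun p : ℝ => (1 - p) / p) (nhds 1) (nhds 0) := by
  have hcont : ContinuousAt (fun p : ℝ => (1 - p) / p) 1 :=
    (continuousAt_const.sub continuousAt_id).div continuousAt_id one_ne_zero
  simpa using hcont.tendsto

lemma tendsto_exp_mul_log_sub_self_nhds_zero :
    Tendsto (fun t : ℝ => exp (t * log t - t)) (nhds 0) (nhds 1) := by
  have hcont : Continuous fun t : ℝ => exp (t * log t - t) :=
    (continuous_mul_log.sub continuous_id).rexp
  simpa using hcont.tendsto 0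

/-- The asymptotic competitive ratio `f(p) = ((1-p)/p)^{(1-p)/p} · e^{p/p' − 1/p'}`
(with `p' = p`, so the exponential factor is `e^{1 − 1/p}`) for the secretary problem with
symmetric binary classifier advice is strictly increasing on `(1/2, 1)`, equals `1/e` at
`p = 1/2`, and tends to `1` as `p → 1⁻`. -/
theorem stmt_12 :
    StrictMonoOn (fun p : ℝ => ((1 - p) / p) ^ ((1 - p) / p) * Real.exp (1 - 1 / p))
        (Set.Ioo (1 / 2 : ℝ) 1) ∧
      ((1 - (1 / 2 : ℝ)) / (1 / 2)) ^ ((1 - (1 / 2 : ℝ)) / (1 / 2)) *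
          Real.exp (1 - 1 / (1 / 2 : ℝ)) = 1 / Real.exp 1 ∧
      Tendsto (fun p : ℝ => ((1 - p) / p) ^ ((1 - p) / p) * Real.exp (1 - 1 / p))
        (nhdsWithin 1 (Set.Iio 1)) (nhds 1) := by
  have hpos : ∀ p ∈ Set.Ioo (1 / 2 : ℝ) 1, 0 < p := fun p hp => by linarith [hp.1]
  have hratio : ∀ p ∈ Set.Ioo (1 / 2 : ℝ) 1,
      exp ((1 - p) / p * log ((1 - p) / p) - (1 - p) / p) =
        ((1 - p) / p) ^ ((1 - p) / p) * exp (1 - 1 / p) :=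
    fun p hp => (ratio_eq_exp (hpos p hp) hp.2.le).symm
  refine ⟨?_, by norm_num [exp_neg], ?_⟩
  · refine StrictMonoOn.congr ?_ hratio
    exact exp_strictMono.comp_strictMonoOn <|
      strictAntiOn_mul_log_sub_self.comp (strictAntiOn_one_sub_div_self.mono hpos)
        fun p hp => one_sub_div_self_mem_Icc (Set.Ioo_subset_Icc_self hp)
  · refine Tendsto.congr' ?_ (tendsto_exp_mul_log_sub_self_nhds_zero.comp
      (tendsto_one_sub_div_self_nhds_one.mono_left nhdsWithin_le_nhds))
    filter_upwards [Ioo_mem_nhdsLT (show (1 / 2 : ℝ) < 1 by norm_num)] with p hp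
    exact hratio p hp
end
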